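/- For the decentralized update W(k+1) = W(k)A − η(k)G(k) with possibly time-varying learning rates η(k) > 0 and A an M×M nonnegative, doubly stochastic, irreducible, primitive, normal matrix with spectral projectors P_q, for every k ≥ 0: E_ξ[ ||ΔW(k+1)||_F ] ≤ √M·||ΔW(0)||_F·|λ2|^{k+1} + Σ_{h=0}^{k} η(h)·sqrt( Σ_{q=2}^{Q} |λ_q|^{2(k−h)}·E_ξ[ ||ΔG(h)P_q||²_F ] ). -/

import Mathlib

/-!
Row and column sums equal to 1 make centering `B ↦ B (I - 11ᵀ/M)` commute with right
multiplication by `A`, so the centered iterates obey the same recursion and unroll to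
`ΔW(k+1) = ΔW(0) A^(k+1) - ∑ₕ η(h) ΔG(h) A^(k-h)`. Over `ℂ`, `A^m = ∑_q λ_q^m P_q`, and since the
`P_q` are orthogonal projectors, `‖X ∑_q c_q P_q‖²_F = ∑_q |c_q|² ‖X P_q‖²_F`. A centered matrix
is annihilated by `P_1 = 11ᵀ/M`, so only `q ≥ 2` contributes, each with `|λ_q| ≤ |λ₂|`. The
triangle inequality then bounds `‖ΔW(k+1)‖_F` pointwise, and Jensen's inequality for the concave
square root moves the expectation under the roots.
-/

open MeasureTheory Matrix Finset

noncomputable section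

/-- Squared Frobenius norm of a real matrix. -/
def frobSq {n M : ℕ} (B : Matrix (Fin n) (Fin M) ℝ) : ℝ := ∑ i, ∑ j, B i j ^ 2

/-- Frobenius norm of a real matrix. -/
def frobNorm {n M : ℕ} (B : Matrix (Fin n) (Fin M) ℝ) : ℝ := Real.sqrt (frobSq B)

/-- Squared Frobenius norm of a complex matrix. -/
def frobSqC {n M : ℕ} (B : Matrix (Fin n) (Fin M) ℂ) : ℝ := ∑ i, ∑ j, ‖B i j‖ ^ 2

/-- The `j`-th column of a matrix, viewed as a vector of `EuclideanSpace ℝ (Fin n)`. -/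
def col {n M : ℕ} (B : Matrix (Fin n) (Fin M) ℝ) (j : Fin M) : EuclideanSpace ℝ (Fin n) :=
  WithLp.toLp 2 fun i => B i j

/-- `ΔB := B (I - 𝟙𝟙ᵀ/M)`: subtract from every column the average of all columns. -/
def ctr {n M : ℕ} (B : Matrix (Fin n) (Fin M) ℝ) : Matrix (Fin n) (Fin M) ℝ :=
  Matrix.of fun i j => B i j - (∑ j', B i j') / M

/-- The average of the columns of `B` (the average model `w̄`). -/
def colAvg {n M : ℕ} (B : Matrix (Fin n) (Fin M) ℝ) : EuclideanSpace ℝ (Fin n) :=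
  WithLp.toLp 2 fun i => (∑ j, B i j) / M

/-- Time average of a sequence of vectors over iterations `0, …, K-1`. -/
def timeAvg {n : ℕ} (K : ℕ) (v : ℕ → EuclideanSpace ℝ (Fin n)) : EuclideanSpace ℝ (Fin n) :=
  WithLp.toLp 2 fun i => (∑ k ∈ Finset.range K, v k i) / K

/-- `g` is a subgradient of `f` at `x`. -/
def IsSubgradAt {n : ℕ} (f : EuclideanSpace ℝ (Fin n) → ℝ)
    (g x : EuclideanSpace ℝ (Fin n)) : Prop :=
  ∀ y, f x + (inner ℝ g (y - x) : ℝ) ≤ f y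

def avgProj (𝕜 : Type*) [DivisionRing 𝕜] (M : ℕ) : Matrix (Fin M) (Fin M) 𝕜 :=
  Matrix.of fun _ _ => (M : 𝕜)⁻¹

section Centering

variable {n M : ℕ}

theorem avgProj_mul_self (𝕜 : Type*) [Field 𝕜] [CharZero 𝕜] :
    avgProj 𝕜 M * avgProj 𝕜 M = avgProj 𝕜 M := by
  ext i j
  have hM : (M : 𝕜) ≠ 0 := Nat.cast_ne_zero.mpr i.pos.ne'
  simp [avgProj, mul_apply]
  field_simp

theorem mul_avgProj_of_sum_row {A : Matrix (Fin M) (Fin M) ℝ} (hrows : ∀ i, ∑ j, A i j = 1) :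
    A * avgProj ℝ M = avgProj ℝ M := by
  ext i j
  simp [avgProj, mul_apply, ← Finset.sum_mul, hrows]

theorem avgProj_mul_of_sum_col {A : Matrix (Fin M) (Fin M) ℝ} (hcols : ∀ j, ∑ i, A i j = 1) :
    avgProj ℝ M * A = avgProj ℝ M := by
  ext i j
  simp [avgProj, mul_apply, ← Finset.mul_sum, hcols]

theorem map_avgProj : (avgProj ℝ M).map (fun x => (x : ℂ)) = avgProj ℂ M := by
  ext; simp [avgProj]

theorem ctr_eq_mul_one_sub_avgProj (B : Matrix (Fin n) (Fin M) ℝ) :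
    ctr B = B * (1 - avgProj ℝ M) := by
  rw [Matrix.mul_sub, Matrix.mul_one]
  ext i j
  simp [ctr, avgProj, mul_apply, div_eq_mul_inv, Finset.sum_mul]

theorem ctr_sub_smul (B C : Matrix (Fin n) (Fin M) ℝ) (c : ℝ) :
    ctr (B - c • C) = ctr B - c • ctr C := by
  simp only [ctr_eq_mul_one_sub_avgProj, Matrix.sub_mul, Matrix.smul_mul]

theorem ctr_mul_of_sum_row_of_sum_col {A : Matrix (Fin M) (Fin M) ℝ}
    (hrows : ∀ i, ∑ j, A i j = 1) (hcols : ∀ j, ∑ i, A i j = 1) (B : Matrix (Fin n) (Fin M) ℝ) :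
    ctr (B * A) = ctr B * A := by
  rw [ctr_eq_mul_one_sub_avgProj, ctr_eq_mul_one_sub_avgProj, Matrix.mul_assoc, Matrix.mul_assoc,
    Matrix.mul_sub, Matrix.sub_mul, mul_avgProj_of_sum_row hrows, avgProj_mul_of_sum_col hcols,
    Matrix.mul_one, Matrix.one_mul]

theorem ctr_mul_avgProj (B : Matrix (Fin n) (Fin M) ℝ) : ctr B * avgProj ℝ M = 0 := by
  rw [ctr_eq_mul_one_sub_avgProj, Matrix.mul_assoc, Matrix.sub_mul, avgProj_mul_self,
    Matrix.one_mul, sub_self, Matrix.mul_zero]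

end Centering

section Frobenius

variable {n M : ℕ}

attribute [local instance] Matrix.frobeniusNormedAddCommGroup Matrix.frobeniusNormedSpace

theorem frobNorm_eq_norm (B : Matrix (Fin n) (Fin M) ℝ) : frobNorm B = ‖B‖ := by
  simp [frobNorm, frobSq, frobenius_norm_def, Real.sqrt_eq_rpow]

theorem frobNorm_sub_sum_smul_le {ι : Type*} (s : Finset ι) (B : Matrix (Fin n) (Fin M) ℝ)
    (c : ι → ℝ) (C : ι → Matrix (Fin n) (Fin M) ℝ) :
    frobNorm (B - ∑ h ∈ s, c h • C h) ≤ frobNorm B + ∑ h ∈ s, |c h| * frobNorm (C h) := by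
  simp only [frobNorm_eq_norm]
  refine (norm_sub_le _ _).trans (add_le_add_right ((norm_sum_le _ _).trans_eq ?_) _)
  simp [norm_smul]

theorem frobSq_eq_frobSqC_map (B : Matrix (Fin n) (Fin M) ℝ) :
    frobSq B = frobSqC (B.map (fun x => (x : ℂ))) := by
  simp [frobSq, frobSqC, sq_abs]

theorem frobSqC_nonneg (B : Matrix (Fin n) (Fin M) ℂ) : 0 ≤ frobSqC B := by
  unfold frobSqC; positivity

theorem frobSqC_eq_re_trace (B : Matrix (Fin n) (Fin M) ℂ) : frobSqC B = (trace (B * Bᴴ)).re := by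
  simp [frobSqC, trace, mul_apply, Complex.mul_conj, Complex.normSq_eq_norm_sq, -Complex.ofReal_pow]

end Frobenius

section SpectralFamily

variable {m ι R : Type*} [Fintype ι] [CommSemiring R] {P : ι → Matrix m m R}

theorem sum_smul_mul_sum_smul [Fintype m] [DecidableEq ι] (hidem : ∀ q, P q * P q = P q)
    (horth : ∀ q q', q ≠ q' → P q * P q' = 0) (a b : ι → R) :
    (∑ q, a q • P q) * ∑ q, b q • P q = ∑ q, (a q * b q) • P q := by
  simp only [Finset.sum_mul_sum, smul_mul_smul_comm]
  refine Finset.sum_congr rfl fun q _ => ?_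
  rw [Finset.sum_eq_single q (fun q' _ h => by rw [horth q q' (Ne.symm h), smul_zero]) (by simp),
    hidem]

theorem sum_smul_pow [Fintype m] [DecidableEq m] [DecidableEq ι] (hidem : ∀ q, P q * P q = P q)
    (horth : ∀ q q', q ≠ q' → P q * P q' = 0) (hPsum : ∑ q, P q = 1) (c : ι → R) (k : ℕ) :
    (∑ q, c q • P q) ^ k = ∑ q, c q ^ k • P q := by
  induction k with
  | zero => simp [hPsum]
  | succ k ih => simp only [pow_succ, ih, sum_smul_mul_sum_smul hidem horth]

theorem conjTranspose_sum_smul [StarRing R] (hherm : ∀ q, (P q)ᴴ = P q) (c : ι → R) :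
    (∑ q, c q • P q)ᴴ = ∑ q, star (c q) • P q := by
  simp [conjTranspose_sum, conjTranspose_smul, hherm]

end SpectralFamily

theorem frobSqC_mul_sum_smul {ι : Type*} [Fintype ι] [DecidableEq ι] {n M : ℕ}
    {P : ι → Matrix (Fin M) (Fin M) ℂ}
    (hherm : ∀ q, (P q)ᴴ = P q) (hidem : ∀ q, P q * P q = P q)
    (horth : ∀ q q', q ≠ q' → P q * P q' = 0) (X : Matrix (Fin n) (Fin M) ℂ) (c : ι → ℂ) :
    frobSqC (X * ∑ q, c q • P q) = ∑ q, ‖c q‖ ^ 2 * frobSqC (X * P q) := by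
  have hgram : (∑ q, c q • P q) * (∑ q, c q • P q)ᴴ = ∑ q, ((‖c q‖ ^ 2 : ℝ) : ℂ) • P q := by
    rw [conjTranspose_sum_smul hherm, sum_smul_mul_sum_smul hidem horth]
    simp [Complex.mul_conj, Complex.normSq_eq_norm_sq]
  have hproj : ∀ q, X * P q * (X * P q)ᴴ = X * P q * Xᴴ := fun q => by
    rw [conjTranspose_mul, hherm, ← Matrix.mul_assoc, Matrix.mul_assoc X (P q), hidem]
  calc frobSqC (X * ∑ q, c q • P q)
      = (trace (X * ((∑ q, c q • P q) * (∑ q, c q • P q)ᴴ) * Xᴴ)).re := by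
        rw [frobSqC_eq_re_trace, conjTranspose_mul, Matrix.mul_assoc, Matrix.mul_assoc,
          Matrix.mul_assoc]
    _ = ∑ q, ‖c q‖ ^ 2 * frobSqC (X * P q) := by
        simp only [hgram, Matrix.mul_sum, Matrix.sum_mul, Matrix.mul_smul, Matrix.smul_mul,
          trace_sum, trace_smul, smul_eq_mul, Complex.re_sum, Complex.re_ofReal_mul,
          frobSqC_eq_re_trace, hproj]

theorem eq_mul_pow_sub_sum_of_succ {R l m : Type*} [CommRing R] [Fintype m] [DecidableEq m]
    {A : Matrix m m R} {η : ℕ → R} {V H : ℕ → Matrix l m R}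
    (hV : ∀ k, V (k + 1) = V k * A - η k • H k) (k : ℕ) :
    V (k + 1) = V 0 * A ^ (k + 1) - ∑ h ∈ range (k + 1), η h • (H h * A ^ (k - h)) := by
  induction k with
  | zero => simp [hV]
  | succ k ih =>
    have hshift : (∑ h ∈ range (k + 1), η h • (H h * A ^ (k - h))) * A
        = ∑ h ∈ range (k + 1), η h • (H h * A ^ (k + 1 - h)) := by
      rw [Matrix.sum_mul]
      refine Finset.sum_congr rfl fun h hh => ?_
      rw [Nat.sub_add_comm (Nat.lt_succ_iff.mp (Finset.mem_range.mp hh)), pow_succ,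
        Matrix.smul_mul, Matrix.mul_assoc]
    rw [hV, ih, Matrix.sub_mul, hshift, Matrix.mul_assoc, ← pow_succ, sub_sub,
      Finset.sum_range_succ _ (k + 1), Nat.sub_self, pow_zero, Matrix.mul_one]

theorem map_ofReal_mul {l m o : Type*} [Fintype m] (X : Matrix l m ℝ) (Y : Matrix m o ℝ) :
    (X * Y).map (fun x => (x : ℂ)) = X.map (fun x => (x : ℂ)) * Y.map (fun x => (x : ℂ)) :=
  Matrix.map_mul (f := Complex.ofRealHom)

section ConsensusMatrix

variable {n M Q : ℕ} {A : Matrix (Fin M) (Fin M) ℝ} {lam : Fin Q → ℂ}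
  {P : Fin Q → Matrix (Fin M) (Fin M) ℂ}

theorem frobSq_ctr_mul_pow (hdecomp : A.map (fun x => (x : ℂ)) = ∑ q, lam q • P q)
    (hherm : ∀ q, (P q)ᴴ = P q) (hidem : ∀ q, P q * P q = P q)
    (horth : ∀ q q', q ≠ q' → P q * P q' = 0) (hPsum : ∑ q, P q = 1)
    (hP1 : ∀ q : Fin Q, (q : ℕ) = 0 → P q = avgProj ℂ M)
    (B : Matrix (Fin n) (Fin M) ℝ) (k : ℕ) :
    frobSq (ctr B * A ^ k) = ∑ q ∈ univ.filter (fun q : Fin Q => (q : ℕ) ≠ 0),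
      ‖lam q‖ ^ (2 * k) * frobSqC ((ctr B).map (fun x => (x : ℂ)) * P q) := by
  have hpow : (A ^ k).map (fun x => (x : ℂ)) = ∑ q, lam q ^ k • P q := by
    rw [← sum_smul_pow hidem horth hPsum, ← hdecomp]
    exact map_pow Complex.ofRealHom.mapMatrix A k
  have hfirst : ∀ q : Fin Q, (q : ℕ) = 0 → (ctr B).map (fun x => (x : ℂ)) * P q = 0 := by
    intro q hq
    rw [hP1 q hq, ← map_avgProj, ← map_ofReal_mul, ctr_mul_avgProj]
    exact Matrix.map_zero _ Complex.ofReal_zero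
  rw [frobSq_eq_frobSqC_map, map_ofReal_mul, hpow, frobSqC_mul_sum_smul hherm hidem horth]
  simp only [norm_pow, ← pow_mul, mul_comm k 2]
  refine (Finset.sum_filter_of_ne fun q _ hne => ?_).symm
  contrapose! hne
  simp [hfirst q (by simpa using hne), frobSqC]

theorem frobNorm_ctr_mul_pow_le (hdecomp : A.map (fun x => (x : ℂ)) = ∑ q, lam q • P q)
    (hherm : ∀ q, (P q)ᴴ = P q) (hidem : ∀ q, P q * P q = P q)
    (horth : ∀ q q', q ≠ q' → P q * P q' = 0) (hPsum : ∑ q, P q = 1)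
    (hP1 : ∀ q : Fin Q, (q : ℕ) = 0 → P q = avgProj ℂ M)
    {r : ℝ} (hr : 0 ≤ r) (hle : ∀ q : Fin Q, (q : ℕ) ≠ 0 → ‖lam q‖ ≤ r)
    (B : Matrix (Fin n) (Fin M) ℝ) (k : ℕ) :
    frobNorm (ctr B * A ^ k) ≤ r ^ k * frobNorm (ctr B) := by
  have hsq : frobSq (ctr B * A ^ k) ≤ (r ^ k) ^ 2 * frobSq (ctr B) := by
    have h0 := frobSq_ctr_mul_pow hdecomp hherm hidem horth hPsum hP1 B 0
    simp only [pow_zero, Matrix.mul_one, mul_zero, one_mul] at h0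
    rw [frobSq_ctr_mul_pow hdecomp hherm hidem horth hPsum hP1, h0, Finset.mul_sum, ← pow_mul,
      mul_comm k 2]
    refine Finset.sum_le_sum fun q hq => mul_le_mul_of_nonneg_right ?_ (frobSqC_nonneg _)
    exact pow_le_pow_left₀ (norm_nonneg _) (hle q (Finset.mem_filter.mp hq).2) _
  calc frobNorm (ctr B * A ^ k) ≤ Real.sqrt ((r ^ k) ^ 2 * frobSq (ctr B)) :=
        Real.sqrt_le_sqrt hsq
    _ = r ^ k * frobNorm (ctr B) := by
        rw [Real.sqrt_mul (by positivity), Real.sqrt_sq (by positivity), frobNorm]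

theorem frobNorm_ctr_succ_le (hdecomp : A.map (fun x => (x : ℂ)) = ∑ q, lam q • P q)
    (hherm : ∀ q, (P q)ᴴ = P q) (hidem : ∀ q, P q * P q = P q)
    (horth : ∀ q q', q ≠ q' → P q * P q' = 0) (hPsum : ∑ q, P q = 1)
    (hP1 : ∀ q : Fin Q, (q : ℕ) = 0 → P q = avgProj ℂ M)
    (hrows : ∀ i, ∑ j, A i j = 1) (hcols : ∀ j, ∑ i, A i j = 1)
    {r : ℝ} (hr : 0 ≤ r) (hle : ∀ q : Fin Q, (q : ℕ) ≠ 0 → ‖lam q‖ ≤ r)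
    {η : ℕ → ℝ} (hη : ∀ k, 0 ≤ η k) {W G : ℕ → Matrix (Fin n) (Fin M) ℝ}
    (hupd : ∀ k, W (k + 1) = W k * A - η k • G k) (k : ℕ) :
    frobNorm (ctr (W (k + 1))) ≤ r ^ (k + 1) * frobNorm (ctr (W 0))
      + ∑ h ∈ range (k + 1), η h *
          Real.sqrt (∑ q ∈ univ.filter (fun q : Fin Q => (q : ℕ) ≠ 0),
            ‖lam q‖ ^ (2 * (k - h)) * frobSqC ((ctr (G h)).map (fun x => (x : ℂ)) * P q)) := by
  have hctr : ∀ k, ctr (W (k + 1)) = ctr (W k) * A - η k • ctr (G k) := fun k => by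
    rw [hupd, ctr_sub_smul, ctr_mul_of_sum_row_of_sum_col hrows hcols]
  rw [eq_mul_pow_sub_sum_of_succ (V := fun k => ctr (W k)) (H := fun k => ctr (G k)) hctr k]
  refine (frobNorm_sub_sum_smul_le _ _ _ _).trans (add_le_add
    (frobNorm_ctr_mul_pow_le hdecomp hherm hidem horth hPsum hP1 hr hle _ _) (le_of_eq ?_))
  refine Finset.sum_congr rfl fun h _ => ?_
  rw [abs_of_nonneg (hη h), frobNorm, frobSq_ctr_mul_pow hdecomp hherm hidem horth hPsum hP1]

end ConsensusMatrix

section Jensen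

variable {Ω : Type*} [MeasurableSpace Ω] {μ : Measure Ω} {f : Ω → ℝ}

theorem integrable_sqrt_of_nonneg [IsFiniteMeasure μ] (hf : Integrable f μ) (h0 : ∀ ω, 0 ≤ f ω) :
    Integrable (fun ω => Real.sqrt (f ω)) μ := by
  have hmeas : AEStronglyMeasurable (fun ω => Real.sqrt (f ω)) μ :=
    Real.continuous_sqrt.comp_aestronglyMeasurable hf.1
  refine ((memLp_two_iff_integrable_sq hmeas).mpr ?_).integrable one_le_two
  simpa only [Real.sq_sqrt (h0 _)] using hf

theorem integral_sqrt_le_sqrt_integral [IsProbabilityMeasure μ] (hf : Integrable f μ)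
    (h0 : ∀ ω, 0 ≤ f ω) :
    ∫ ω, Real.sqrt (f ω) ∂μ ≤ Real.sqrt (∫ ω, f ω ∂μ) :=
  Real.strictConcaveOn_sqrt.concaveOn.le_map_integral Real.continuous_sqrt.continuousOn
    isClosed_Ici (Filter.Eventually.of_forall h0) hf (integrable_sqrt_of_nonneg hf h0)

theorem integral_le_add_sum_mul_sqrt_integral [IsProbabilityMeasure μ] {ι : Type*} (s : Finset ι)
    {X : Ω → ℝ} {g : ι → Ω → ℝ} {c : ℝ} {a : ι → ℝ} (hX : Integrable X μ)
    (hg : ∀ h, Integrable (g h) μ) (hg0 : ∀ h ω, 0 ≤ g h ω) (ha : ∀ h, 0 ≤ a h)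
    (hle : ∀ ω, X ω ≤ c + ∑ h ∈ s, a h * Real.sqrt (g h ω)) :
    ∫ ω, X ω ∂μ ≤ c + ∑ h ∈ s, a h * Real.sqrt (∫ ω, g h ω ∂μ) := by
  have hint : ∀ h, Integrable (fun ω => a h * Real.sqrt (g h ω)) μ :=
    fun h => (integrable_sqrt_of_nonneg (hg h) (hg0 h)).const_mul _
  have hsum : Integrable (fun ω => c + ∑ h ∈ s, a h * Real.sqrt (g h ω)) μ :=
    (integrable_const c).add (integrable_finsetSum _ fun h _ => hint h)
  refine (integral_mono hX hsum hle).trans ?_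
  rw [integral_add (integrable_const c) (integrable_finsetSum _ fun h _ => hint h),
    integral_finsetSum _ fun h _ => hint h, integral_const, probReal_univ, one_smul]
  refine add_le_add_right (Finset.sum_le_sum fun h _ => ?_) c
  rw [integral_const_mul]
  exact mul_le_mul_of_nonneg_left (integral_sqrt_le_sqrt_integral (hg h) (hg0 h)) (ha h)

end Jensen

theorem statement9_general
    (n M Q : ℕ) (hM : 0 < M) (hQ : 1 < Q)
    -- the consensus matrix: nonnegative, doubly stochastic (A4), normal (A4),
    -- irreducible (strongly connected graph, A3) and primitive (positive diagonal)
    (A : Matrix (Fin M) (Fin M) ℝ)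
    (hrows : ∀ i, ∑ j, A i j = 1)
    (hcols : ∀ j, ∑ i, A i j = 1)
    -- spectral decomposition of `A` into orthogonal projectors onto its `Q` distinct
    -- eigenspaces, with eigenvalues ordered by decreasing modulus, `λ₁ = 1 > |λ₂|`
    (lam : Fin Q → ℂ) (P : Fin Q → Matrix (Fin M) (Fin M) ℂ)
    (hdecomp : A.map (fun x => (x : ℂ)) = ∑ q, lam q • P q)
    (hherm : ∀ q, (P q)ᴴ = P q)
    (hidem : ∀ q, P q * P q = P q)
    (horth : ∀ q q', q ≠ q' → P q * P q' = 0)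
    (hPsum : ∑ q, P q = 1)
    (hord : ∀ q q' : Fin Q, q ≤ q' → ‖lam q'‖ ≤ ‖lam q‖)
    (hP1 : ∀ q : Fin Q, (q : ℕ) = 0 → P q = Matrix.of fun _ _ => (M : ℂ)⁻¹)
    (lam2 : ℝ) (hlam2 : lam2 = ‖lam ⟨1, hQ⟩‖)
    -- probability space carrying the minibatch randomness, the random iterates `W k`
    -- and the random stochastic subgradient matrices `G k`
    {Ω : Type*} [m0 : MeasurableSpace Ω] (μ : Measure Ω) [IsProbabilityMeasure μ]
    (W G : ℕ → Ω → Matrix (Fin n) (Fin M) ℝ)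
    -- time-varying learning rates and the decentralized update, with deterministic
    -- initialization `W0`
    (η : ℕ → ℝ) (hη : ∀ k, 0 < η k)
    (W0 : Matrix (Fin n) (Fin M) ℝ) (hW0 : ∀ ω, W 0 ω = W0)
    (hupd : ∀ k ω, W (k + 1) ω = W k ω * A - η k • G k ω)
    -- integrability
    (hWint : ∀ k, Integrable (fun ω => frobNorm (ctr (W k ω))) μ)
    (hGint : ∀ k (q : Fin Q),
      Integrable (fun ω => frobSqC ((ctr (G k ω)).map (fun x => (x : ℂ)) * P q)) μ) :
    ∀ k : ℕ,
      ∫ ω, frobNorm (ctr (W (k + 1) ω)) ∂μ ≤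
        Real.sqrt M * frobNorm (ctr W0) * lam2 ^ (k + 1)
        + ∑ h ∈ Finset.range (k + 1), η h *
            Real.sqrt (∑ q ∈ Finset.univ.filter (fun q : Fin Q => (q : ℕ) ≠ 0),
              ‖lam q‖ ^ (2 * (k - h)) *
                ∫ ω, frobSqC ((ctr (G h ω)).map (fun x => (x : ℂ)) * P q) ∂μ) := by
  intro k
  have hlam2_nonneg : 0 ≤ lam2 := hlam2 ▸ norm_nonneg _
  have hlam_le : ∀ q : Fin Q, (q : ℕ) ≠ 0 → ‖lam q‖ ≤ lam2 := fun q hq =>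
    hlam2 ▸ hord _ _ (Nat.one_le_iff_ne_zero.mpr hq)
  have hinit : ∀ ω, lam2 ^ (k + 1) * frobNorm (ctr (W 0 ω)) ≤
      Real.sqrt M * frobNorm (ctr W0) * lam2 ^ (k + 1) := fun ω => by
    have : 0 ≤ frobNorm (ctr W0) := Real.sqrt_nonneg _
    calc lam2 ^ (k + 1) * frobNorm (ctr (W 0 ω)) = 1 * frobNorm (ctr W0) * lam2 ^ (k + 1) := by
          rw [hW0]; ring
      _ ≤ _ := by gcongr; exact Real.one_le_sqrt.mpr (Nat.one_le_cast.mpr hM)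
  have hpt := fun ω => (frobNorm_ctr_succ_le hdecomp hherm hidem horth hPsum hP1 hrows hcols
    hlam2_nonneg hlam_le (fun h => (hη h).le) (W := fun k => W k ω) (G := fun k => G k ω)
    (hupd · ω) k).trans (add_le_add_left (hinit ω) _)
  refine (integral_le_add_sum_mul_sqrt_integral _ (hWint _)
    (fun h => integrable_finsetSum _ fun q _ => (hGint h q).const_mul _)
    (fun h ω => Finset.sum_nonneg fun q _ => mul_nonneg (by positivity) (frobSqC_nonneg _))
    (fun h => (hη h).le) hpt).trans_eq ?_
  refine congrArg _ (Finset.sum_congr rfl fun h _ => ?_)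
  rw [integral_finsetSum _ fun q _ => (hGint h q).const_mul _]
  simp only [integral_const_mul]

/-- **Lemma 1 (consensus error).** For the decentralized update
`W(k+1) = W(k) A - η(k) G(k)` with time-varying learning rates, the expected consensus error
is controlled by the spectral projections of the subgradient noise. -/
theorem statement9
    (n M Q : ℕ) (hM : 0 < M) (hQ : 1 < Q)
    -- the consensus matrix: nonnegative, doubly stochastic (A4), normal (A4),
    -- irreducible (strongly connected graph, A3) and primitive (positive diagonal)
    (A : Matrix (Fin M) (Fin M) ℝ)
    (hnonneg : ∀ i j, 0 ≤ A i j)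
    (hrows : ∀ i, ∑ j, A i j = 1)
    (hcols : ∀ j, ∑ i, A i j = 1)
    (hnormal : Aᵀ * A = A * Aᵀ)
    (hirr : ∀ i j, ∃ k : ℕ, 0 < (A ^ k) i j)
    (hdiag : ∀ i, 0 < A i i)
    -- spectral decomposition of `A` into orthogonal projectors onto its `Q` distinct
    -- eigenspaces, with eigenvalues ordered by decreasing modulus, `λ₁ = 1 > |λ₂|`
    (lam : Fin Q → ℂ) (P : Fin Q → Matrix (Fin M) (Fin M) ℂ)
    (hdecomp : A.map (fun x => (x : ℂ)) = ∑ q, lam q • P q)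
    (hinj : Function.Injective lam)
    (hherm : ∀ q, (P q)ᴴ = P q)
    (hidem : ∀ q, P q * P q = P q)
    (horth : ∀ q q', q ≠ q' → P q * P q' = 0)
    (hPsum : ∑ q, P q = 1)
    (hord : ∀ q q' : Fin Q, q ≤ q' → ‖lam q'‖ ≤ ‖lam q‖)
    (hlam1 : ∀ q : Fin Q, (q : ℕ) = 0 → lam q = 1)
    (hP1 : ∀ q : Fin Q, (q : ℕ) = 0 → P q = Matrix.of fun _ _ => (M : ℂ)⁻¹)
    (lam2 : ℝ) (hlam2 : lam2 = ‖lam ⟨1, hQ⟩‖) (hlam2lt : lam2 < 1)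
    -- probability space carrying the minibatch randomness, the random iterates `W k`
    -- and the random stochastic subgradient matrices `G k`
    {Ω : Type*} [m0 : MeasurableSpace Ω] (μ : Measure Ω) [IsProbabilityMeasure μ]
    (W G : ℕ → Ω → Matrix (Fin n) (Fin M) ℝ)
    (hGmeas : ∀ k i j, Measurable fun ω => G k ω i j)
    -- time-varying learning rates and the decentralized update, with deterministic
    -- initialization `W0`
    (η : ℕ → ℝ) (hη : ∀ k, 0 < η k)
    (W0 : Matrix (Fin n) (Fin M) ℝ) (hW0 : ∀ ω, W 0 ω = W0)
    (hupd : ∀ k ω, W (k + 1) ω = W k ω * A - η k • G k ω)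
    -- integrability
    (hWint : ∀ k, Integrable (fun ω => frobNorm (ctr (W k ω))) μ)
    (hGint : ∀ k (q : Fin Q),
      Integrable (fun ω => frobSqC ((ctr (G k ω)).map (fun x => (x : ℂ)) * P q)) μ) :
    ∀ k : ℕ,
      ∫ ω, frobNorm (ctr (W (k + 1) ω)) ∂μ ≤
        Real.sqrt M * frobNorm (ctr W0) * lam2 ^ (k + 1)
        + ∑ h ∈ Finset.range (k + 1), η h *
            Real.sqrt (∑ q ∈ Finset.univ.filter (fun q : Fin Q => (q : ℕ) ≠ 0),
              ‖lam q‖ ^ (2 * (k - h)) *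
                ∫ ω, frobSqC ((ctr (G h ω)).map (fun x => (x : ℂ)) * P q) ∂μ) :=
  statement9_general n M Q hM hQ A hrows hcols lam P hdecomp hherm hidem horth hPsum hord hP1 lam2
    hlam2 (m0 := m0) μ W G η hη W0 hW0 hupd hWint hGint

end
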